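/- Assuming the asymptotic π(x) = li(x) + O(x·e^{−√(log x)}), for every constant c ≥ 0 the assumption that π(x+y) ≥ π(x) + π(y) holds for arbitrarily large x with y = x·(log x)^{−c} leads to a contradiction. -/
import Mathlib

open Filter Asymptotics Real

noncomputable def picnt (x : ℝ) : ℕ := Nat.primeCounting ⌊x⌋₊

noncomputable def li (x : ℝ) : ℝ := ∫ t in (2:ℝ)..x, 1 / Real.log t

lemma logpos2 {t : ℝ} (h : 2 ≤ t) : 0 < Real.log t :=
  Real.log_pos (by linarith)

lemma intble {a b : ℝ} (ha : 2 ≤ a) (hb : 2 ≤ b) :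
    IntervalIntegrable (fun t => 1 / Real.log t) MeasureTheory.volume a b := by
  apply ContinuousOn.intervalIntegrable
  intro t ht
  have h2t : 2 ≤ t := le_trans (le_min ha hb) ht.1
  exact (continuousAt_const.div (Real.continuousAt_log (by linarith))
    (ne_of_gt (logpos2 h2t))).continuousWithinAt

lemma int_upper {a b : ℝ} (ha : 2 ≤ a) (hab : a ≤ b) :
    (∫ t in a..b, 1 / Real.log t) ≤ (b - a) * (1 / Real.log a) := by
  have h := intervalIntegral.integral_mono_on (f := fun t => 1 / Real.log t)
    (g := fun _ => 1 / Real.log a) (μ := MeasureTheory.volume) hab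
    (intble ha (ha.trans hab)) intervalIntegrable_const ?_
  · simpa using h
  · intro t ht
    have h2t : 2 ≤ t := ha.trans ht.1
    exact one_div_le_one_div_of_le (logpos2 ha) (Real.log_le_log (by linarith) ht.1)

lemma int_lower {a b : ℝ} (ha : 2 ≤ a) (hab : a ≤ b) :
    (b - a) * (1 / Real.log b) ≤ ∫ t in a..b, 1 / Real.log t := by
  have hb : 2 ≤ b := ha.trans hab
  have h := intervalIntegral.integral_mono_on (f := fun _ => 1 / Real.log b)
    (g := fun t => 1 / Real.log t) (μ := MeasureTheory.volume) hab
    intervalIntegrable_const (intble ha hb) ?_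
  · simpa using h
  · intro t ht
    have h2t : 2 ≤ t := ha.trans ht.1
    exact one_div_le_one_div_of_le (logpos2 h2t) (Real.log_le_log (by linarith) ht.2)

lemma int_nonneg {a b : ℝ} (ha : 2 ≤ a) (hab : a ≤ b) :
    0 ≤ ∫ t in a..b, 1 / Real.log t := by
  refine le_trans ?_ (int_lower ha hab)
  have h1 := logpos2 (ha.trans hab)
  have h2 : (0:ℝ) ≤ b - a := by linarith
  positivity

lemma li_add {a b : ℝ} (ha : 2 ≤ a) (hab : a ≤ b) :
    li b = li a + ∫ t in a..b, 1 / Real.log t := by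
  rw [li, li, intervalIntegral.integral_add_adjacent_intervals (intble le_rfl ha)
    (intble ha (ha.trans hab))]

set_option maxHeartbeats 2000000 in
theorem stmt6
    (hpnt : (fun x => (picnt x : ℝ) - li x) =O[atTop]
      fun x => x * Real.exp (-Real.sqrt (Real.log x)))
    (c : ℝ) (hc : 0 ≤ c) :
    ¬ (∃ᶠ x : ℝ in atTop,
        picnt x + picnt (x * Real.log x ^ (-c)) ≤ picnt (x + x * Real.log x ^ (-c))) := by
  intro hfreq
  obtain ⟨C, hC⟩ := hpnt.bound
  set D : ℝ := |C| with hD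
  have hD0 : 0 ≤ D := abs_nonneg C
  -- eventual error bound with nonneg constant
  have herr : ∀ᶠ t : ℝ in atTop,
      |(picnt t : ℝ) - li t| ≤ D * (t * Real.exp (-Real.sqrt (Real.log t))) := by
    filter_upwards [hC, eventually_ge_atTop (0:ℝ)] with t h1 h2
    calc |(picnt t : ℝ) - li t| ≤ C * ‖t * Real.exp (-Real.sqrt (Real.log t))‖ := h1
      _ ≤ D * ‖t * Real.exp (-Real.sqrt (Real.log t))‖ :=
          mul_le_mul_of_nonneg_right (le_abs_self C) (norm_nonneg _)
      _ = D * (t * Real.exp (-Real.sqrt (Real.log t))) := by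
          rw [Real.norm_eq_abs, abs_of_nonneg (by positivity)]
  set y : ℝ → ℝ := fun x => x * Real.log x ^ (-c) with hy
  -- y grows at least like sqrt x
  have hygrow : ∀ᶠ x : ℝ in atTop, Real.sqrt x ≤ y x := by
    have h1 : (fun x : ℝ => Real.log x ^ (c:ℝ)) =o[atTop] fun x => x ^ ((1:ℝ)/2) :=
      isLittleO_log_rpow_rpow_atTop c (by norm_num)
    filter_upwards [h1.bound one_pos, eventually_ge_atTop (Real.exp 1),
      eventually_ge_atTop (1:ℝ)] with x hb hex hx1
    have hL1 : 1 ≤ Real.log x := by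
      rw [show (1:ℝ) = Real.log (Real.exp 1) by simp]
      exact Real.log_le_log (Real.exp_pos 1) hex
    have hLc : (0:ℝ) < Real.log x ^ (c:ℝ) := Real.rpow_pos_of_pos (by linarith) c
    have hb' : Real.log x ^ (c:ℝ) ≤ Real.sqrt x := by
      rw [Real.norm_eq_abs, Real.norm_eq_abs, abs_of_nonneg hLc.le, one_mul,
        abs_of_nonneg (Real.rpow_nonneg (by linarith) _), ← Real.sqrt_eq_rpow] at hb
      exact hb
    have hxpos : (0:ℝ) < x := by linarith
    have hyx : y x = x / Real.log x ^ (c:ℝ) := by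
      rw [hy]
      simp only [Real.rpow_neg (show (0:ℝ) ≤ Real.log x by linarith)]
      ring
    rw [hyx, le_div_iff₀ hLc]
    calc Real.sqrt x * Real.log x ^ (c:ℝ) ≤ Real.sqrt x * Real.sqrt x :=
          mul_le_mul_of_nonneg_left hb' (Real.sqrt_nonneg x)
      _ = x := Real.mul_self_sqrt hxpos.le
  have hsqrt_tendsto : Tendsto Real.sqrt atTop atTop := by
    rw [show Real.sqrt = fun x : ℝ => x ^ ((1:ℝ)/2) from funext Real.sqrt_eq_rpow]
    exact tendsto_rpow_atTop (by norm_num)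
  have hy_tendsto : Tendsto y atTop atTop :=
    tendsto_atTop_mono' _ hygrow hsqrt_tendsto
  have hxy_tendsto : Tendsto (fun x => x + y x) atTop atTop := by
    apply tendsto_atTop_mono' _ _ tendsto_id
    filter_upwards [hy_tendsto.eventually (eventually_ge_atTop (0:ℝ))] with x h
    simpa using h
  -- condition (a): exp decay beats powers of log
  have ha_tendsto : Tendsto (fun x : ℝ =>
      Real.exp (-(1/2) * Real.sqrt (Real.log x)) * Real.log x ^ (2*c+2 : ℝ))
      atTop (nhds 0) := by
    have h1 : Tendsto (fun v : ℝ => v ^ (2*(2*c+2)) * Real.exp (-(1/2) * v))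
        atTop (nhds 0) :=
      tendsto_rpow_mul_exp_neg_mul_atTop_nhds_zero _ _ (by norm_num)
    have h2 : Tendsto (fun x : ℝ => Real.sqrt (Real.log x)) atTop atTop :=
      hsqrt_tendsto.comp Real.tendsto_log_atTop
    apply (h1.comp h2).congr'
    filter_upwards [eventually_ge_atTop (Real.exp 1)] with x hex
    have hL1 : 1 ≤ Real.log x := by
      rw [show (1:ℝ) = Real.log (Real.exp 1) by simp]
      exact Real.log_le_log (Real.exp_pos 1) hex
    have hL0 : (0:ℝ) ≤ Real.log x := by linarith
    have hv0 : (0:ℝ) ≤ Real.sqrt (Real.log x) := Real.sqrt_nonneg _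
    have hvsq : Real.sqrt (Real.log x) ^ (2:ℕ) = Real.log x := Real.sq_sqrt hL0
    have h2' : Real.sqrt (Real.log x) ^ ((2:ℕ):ℝ) = Real.log x := by
      rw [Real.rpow_natCast]; exact hvsq
    simp only [Function.comp]
    symm
    calc Real.exp (-(1/2) * Real.sqrt (Real.log x)) * Real.log x ^ (2*c+2:ℝ)
        = Real.exp (-(1/2) * Real.sqrt (Real.log x)) *
            (Real.sqrt (Real.log x) ^ ((2:ℕ):ℝ)) ^ (2*c+2:ℝ) := by rw [h2']
      _ = Real.sqrt (Real.log x) ^ (2*(2*c+2)) *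
            Real.exp (-(1/2) * Real.sqrt (Real.log x)) := by
          rw [← Real.rpow_mul hv0, show ((2:ℕ):ℝ) * (2*c+2) = 2*(2*c+2) by push_cast; ring]
          ring
  -- condition (b): powers of log beat sqrt
  have hb_ev : ∀ᶠ x : ℝ in atTop,
      Real.sqrt x * Real.log x ^ (2*c+2 : ℝ) ≤ x / 64 := by
    have h1 := (isLittleO_log_rpow_rpow_atTop (2*c+2) (show (0:ℝ) < 1/2 by norm_num)).bound
      (show (0:ℝ) < 1/64 by norm_num)
    filter_upwards [h1, eventually_ge_atTop (1:ℝ)] with x hb hx1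
    have hx0 : (0:ℝ) ≤ x := by linarith
    rw [Real.norm_eq_abs, Real.norm_eq_abs,
      abs_of_nonneg (Real.rpow_nonneg (Real.log_nonneg hx1) _),
      abs_of_nonneg (Real.rpow_nonneg hx0 _), ← Real.sqrt_eq_rpow] at hb
    calc Real.sqrt x * Real.log x ^ (2*c+2:ℝ) ≤ Real.sqrt x * (1/64 * Real.sqrt x) :=
          mul_le_mul_of_nonneg_left hb (Real.sqrt_nonneg x)
      _ = Real.sqrt x * Real.sqrt x / 64 := by ring
      _ = x / 64 := by rw [Real.mul_self_sqrt hx0]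
  -- condition: c * log log x small
  have hll : ∀ᶠ x : ℝ in atTop, c * Real.log (Real.log x) ≤ Real.log x / 2 := by
    have h0 : ∀ᶠ t : ℝ in atTop, c * Real.log t ≤ t / 2 := by
      have h1 := (isLittleO_log_rpow_atTop (show (0:ℝ) < 1 by norm_num)).bound
        (show (0:ℝ) < 1/(2*(c+1)) by positivity)
      filter_upwards [h1, eventually_ge_atTop (1:ℝ)] with t hb ht1
      rw [Real.norm_eq_abs, Real.norm_eq_abs, Real.rpow_one,
        abs_of_nonneg (Real.log_nonneg ht1), abs_of_nonneg (by linarith)] at hb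
      have h2 : c * Real.log t ≤ c * (1/(2*(c+1)) * t) :=
        mul_le_mul_of_nonneg_left hb hc
      have hq : c * (1/(2*(c+1)) * t) ≤ t/2 := by
        rw [show c * (1/(2*(c+1)) * t) = (c/(2*(c+1))) * t by ring]
        have h4 : c/(2*(c+1)) ≤ 1/2 := by
          rw [div_le_div_iff₀ (by linarith) (by norm_num)]
          linarith
        nlinarith
      linarith
    exact Real.tendsto_log_atTop.eventually h0
  -- collect everything and pick a bad x
  have hmain : ∀ᶠ x : ℝ in atTop,
      (|(picnt x : ℝ) - li x| ≤ D * (x * Real.exp (-Real.sqrt (Real.log x)))) ∧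
      (|(picnt (y x) : ℝ) - li (y x)| ≤ D * (y x * Real.exp (-Real.sqrt (Real.log (y x))))) ∧
      (|(picnt (x + y x) : ℝ) - li (x + y x)| ≤
        D * ((x + y x) * Real.exp (-Real.sqrt (Real.log (x + y x))))) ∧
      (4 ≤ y x) ∧
      (c * Real.log (Real.log x) ≤ Real.log x / 2) ∧
      (Real.exp (-(1/2) * Real.sqrt (Real.log x)) * Real.log x ^ (2*c+2 : ℝ)
          ≤ 1/(384*(D+1))) ∧
      (Real.sqrt x * Real.log x ^ (2*c+2 : ℝ) ≤ x / 64) ∧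
      (Real.exp 1 ≤ x) ∧ (2 ≤ x) := by
    have haev := ha_tendsto.eventually
      (eventually_le_nhds (show (0:ℝ) < 1/(384*(D+1)) by positivity))
    filter_upwards [herr, hy_tendsto.eventually herr, hxy_tendsto.eventually herr,
      hy_tendsto.eventually (eventually_ge_atTop (4:ℝ)), hll, haev, hb_ev,
      eventually_ge_atTop (Real.exp 1), eventually_ge_atTop (2:ℝ)] with
      x h1 h2 h3 h4 h5 h6 h7 h8 h9
    exact ⟨h1, h2, h3, h4, h5, h6, h7, h8, h9⟩
  obtain ⟨x, hple, herrx, herry, herrxy, hy4, hll', haev, hbev, hex, hx2⟩ :=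
    (hfreq.and_eventually hmain).exists
  clear hmain herr hC hygrow ha_tendsto hb_ev hll hsqrt_tendsto hy_tendsto
    hxy_tendsto hpnt hfreq
  -- notation
  set L : ℝ := Real.log x with hL
  set u : ℝ := Real.log x ^ (-c) with hu
  have hL1 : 1 ≤ L := by
    rw [hL, show (1:ℝ) = Real.log (Real.exp 1) by simp]
    exact Real.log_le_log (Real.exp_pos 1) hex
  have hLpos : (0:ℝ) < L := by linarith
  have hx0 : (0:ℝ) < x := by linarith
  have hupos : (0:ℝ) < u := Real.rpow_pos_of_pos hLpos _
  have hu1 : u ≤ 1 := Real.rpow_le_one_of_one_le_of_nonpos hL1 (by linarith)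
  have hxu0 : 0 < x * u := mul_pos hx0 hupos
  have hyx' : x * u ≤ x := by
    calc x * u ≤ x * 1 := mul_le_mul_of_nonneg_left hu1 hx0.le
      _ = x := mul_one x
  have hyx : y x ≤ x := hyx'
  have hy4' : 4 ≤ x * u := hy4
  have hy2 : 2 ≤ x * u := by linarith
  have hsy2 : 2 ≤ Real.sqrt (x*u) := by
    have h1 : Real.sqrt 4 ≤ Real.sqrt (x*u) := Real.sqrt_le_sqrt hy4'
    rwa [show (4:ℝ) = 2^2 by norm_num, Real.sqrt_sq (by norm_num : (0:ℝ) ≤ 2)] at h1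
  have hsyle : Real.sqrt (x*u) ≤ x*u := by
    have h00 : 1*(x*u) ≤ (x*u)*(x*u) :=
      mul_le_mul_of_nonneg_right (by linarith : (1:ℝ) ≤ x*u) hxu0.le
    have h0 : x*u ≤ (x*u)^2 := by rw [sq]; linarith
    have h1 : Real.sqrt (x*u) ≤ Real.sqrt ((x*u)^2) := Real.sqrt_le_sqrt h0
    rwa [Real.sqrt_sq (by linarith : (0:ℝ) ≤ x*u)] at h1
  -- logs of y
  have hlogy_eq : Real.log (x*u) = L + (-c) * Real.log L := by
    rw [Real.log_mul (by linarith : x ≠ 0) (ne_of_gt hupos), hu, Real.log_rpow hLpos]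
  have hlogL0 : 0 ≤ Real.log L := Real.log_nonneg hL1
  have hlogy_ge : L/2 ≤ Real.log (x*u) := by
    rw [hlogy_eq]; linarith [hll']
  have hlogy_le : Real.log (x*u) ≤ L := by
    rw [hlogy_eq]
    linarith [mul_nonneg hc hlogL0]
  have hlogy_pos : 0 < Real.log (x*u) := by linarith
  -- midpoint m
  set m : ℝ := x + x*u/2 with hm
  have hxm : x ≤ m := by rw [hm]; linarith
  have hm2 : 2 ≤ m := by linarith
  have hmxy : m ≤ x + x*u := by rw [hm]; linarith
  have hxy2 : 2 ≤ x + x*u := by linarith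
  have hlogm_pos : 0 < Real.log m := logpos2 hm2
  have hlogm_le : Real.log m ≤ 2*L := by
    have h1 : Real.log m ≤ Real.log (2*x) := Real.log_le_log (by linarith) (by linarith)
    have h2 : Real.log (2*x) = Real.log 2 + L := by
      rw [Real.log_mul (by norm_num) (by linarith), hL]
    have h3 : Real.log 2 ≤ 1 := by linarith [Real.log_le_sub_one_of_pos (by norm_num : (0:ℝ) < 2)]
    linarith
  have hlogm_ge : L + u/4 ≤ Real.log m := by
    have hmx : m = x * (1 + u/2) := by rw [hm]; ring
    have hu2 : (0:ℝ) < 1 + u/2 := by linarith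
    have h1 : Real.log m = L + Real.log (1 + u/2) := by
      rw [hmx, Real.log_mul (by linarith) (ne_of_gt hu2), hL]
    have h2 : 1 - (1 + u/2)⁻¹ ≤ Real.log (1 + u/2) :=
      Real.one_sub_inv_le_log_of_pos hu2
    have h3 : (1 + u/2) * (1 + u/2)⁻¹ = 1 := mul_inv_cancel₀ (ne_of_gt hu2)
    have hv12 : (1:ℝ)/2 ≤ (1 + u/2)⁻¹ := by
      rw [← one_div]
      calc (1:ℝ)/2 = 1/2 := rfl
        _ ≤ 1/(1 + u/2) := one_div_le_one_div_of_le hu2 (by linarith)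
    have hprod : u*(1/2) ≤ u*(1 + u/2)⁻¹ := mul_le_mul_of_nonneg_left hv12 hupos.le
    have h4 : u/4 ≤ 1 - (1 + u/2)⁻¹ := by linarith [h3, hprod]
    linarith
  -- integral bounds
  have hA1 : (∫ t in x..m, 1 / Real.log t) ≤ (x*u/2) * (1/L) := by
    have h1 := int_upper hx2 hxm
    have h2 : m - x = x*u/2 := by rw [hm]; ring
    rw [h2] at h1
    exact h1
  have hA2 : (∫ t in m..(x + x*u), 1 / Real.log t) ≤ (x*u/2) * (1/Real.log m) := by
    calc (∫ t in m..(x + x*u), 1 / Real.log t) ≤ (x + x*u - m) * (1/Real.log m) :=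
        int_upper hm2 hmxy
      _ = (x*u/2) * (1/Real.log m) := by rw [hm]; ring_nf
  have hBge : (x*u - Real.sqrt (x*u)) * (1/L) ≤
      ∫ t in (Real.sqrt (x*u))..(x*u), 1 / Real.log t := by
    have h1 : 1/L ≤ 1/Real.log (x*u) := one_div_le_one_div_of_le hlogy_pos hlogy_le
    have h2 : 0 ≤ x*u - Real.sqrt (x*u) := by linarith
    calc (x*u - Real.sqrt (x*u)) * (1/L)
        ≤ (x*u - Real.sqrt (x*u)) * (1/Real.log (x*u)) :=
          mul_le_mul_of_nonneg_left h1 h2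
      _ ≤ _ := int_lower hsy2 hsyle
  have hli_xy : li (x + x*u) = li x +
      ((∫ t in x..m, 1 / Real.log t) + ∫ t in m..(x + x*u), 1 / Real.log t) := by
    rw [li_add hx2 (by linarith : x ≤ x + x*u),
      intervalIntegral.integral_add_adjacent_intervals (intble hx2 hm2) (intble hm2 hxy2)]
  have hli_y : li (x*u) = li (Real.sqrt (x*u)) +
      ∫ t in (Real.sqrt (x*u))..(x*u), 1 / Real.log t := li_add hsy2 hsyle
  have hli_sy : 0 ≤ li (Real.sqrt (x*u)) := int_nonneg le_rfl hsy2
  -- gap estimate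
  have hgap : u/(8*L^2) ≤ 1/L - 1/Real.log m := by
    have e : 1/L - 1/Real.log m = (Real.log m - L)/(L * Real.log m) := by
      rw [div_sub_div _ _ (ne_of_gt hLpos) (ne_of_gt hlogm_pos), one_mul, mul_one]
    rw [e, show u/(8*L^2) = (u/4)/(2*L^2) by ring]
    have hbd : L * Real.log m ≤ 2*L^2 := by
      have h5 := mul_le_mul_of_nonneg_left hlogm_le hLpos.le
      linarith [h5]
    apply div_le_div₀ (by linarith) (by linarith) (by positivity) hbd
  -- key lower bound on li y - (li(x+y) - li x)
  have hsyx : Real.sqrt (x*u) ≤ Real.sqrt x := Real.sqrt_le_sqrt hyx'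
  have hsL : Real.sqrt (x*u) * (1/L) ≤ Real.sqrt x := by
    have h1 : 1/L ≤ 1 := by rw [div_le_one hLpos]; linarith
    calc Real.sqrt (x*u) * (1/L) ≤ Real.sqrt (x*u) * 1 :=
        mul_le_mul_of_nonneg_left h1 (Real.sqrt_nonneg _)
      _ ≤ Real.sqrt x := by rw [mul_one]; exact hsyx
  have key2 : x*u^2/(16*L^2) - Real.sqrt x ≤ li (x*u) - (li (x + x*u) - li x) := by
    have hgm := mul_le_mul_of_nonneg_left hgap (show (0:ℝ) ≤ x*u/2 by positivity)
    have e3 : x*u/2 * (u/(8*L^2)) = x*u^2/(16*L^2) := by ring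
    have e4 : x*u/2 * (1/L - 1/Real.log m) =
        (x*u/2)*(1/L) - (x*u/2)*(1/Real.log m) := by ring
    have e5 : (x*u - Real.sqrt (x*u)) * (1/L) =
        (x*u/2)*(1/L) + (x*u/2)*(1/L) - Real.sqrt (x*u)*(1/L) := by ring
    rw [hli_xy, hli_y]
    linarith
  -- error bounds
  set E : ℝ := Real.exp (-(1/2) * Real.sqrt L) with hE
  have hE0 : 0 < E := Real.exp_pos _
  have hsqL0 : 0 ≤ Real.sqrt L := Real.sqrt_nonneg L
  have he_x : |(picnt x : ℝ) - li x| ≤ D * x * E := by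
    have h1 : Real.exp (-Real.sqrt L) ≤ E := by
      rw [hE]; apply Real.exp_le_exp.mpr; linarith
    calc |(picnt x : ℝ) - li x| ≤ D * (x * Real.exp (-Real.sqrt L)) := herrx
      _ ≤ D * (x * E) := by
          apply mul_le_mul_of_nonneg_left _ hD0
          exact mul_le_mul_of_nonneg_left h1 hx0.le
      _ = D * x * E := by ring
  have hsqhalf : (1/2) * Real.sqrt L ≤ Real.sqrt (Real.log (x*u)) := by
    have h1 : Real.sqrt (L/4) ≤ Real.sqrt (Real.log (x*u)) :=
      Real.sqrt_le_sqrt (by linarith)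
    have h2 : Real.sqrt (L/4) = (1/2) * Real.sqrt L := by
      rw [show L/4 = (1/2)^2 * L by ring, Real.sqrt_mul (by positivity) L,
        Real.sqrt_sq (by norm_num : (0:ℝ) ≤ 1/2)]
    linarith
  have he_y : |(picnt (x*u) : ℝ) - li (x*u)| ≤ D * x * E := by
    have h1 : Real.exp (-Real.sqrt (Real.log (x*u))) ≤ E := by
      rw [hE]; apply Real.exp_le_exp.mpr; linarith
    calc |(picnt (x*u) : ℝ) - li (x*u)|
        ≤ D * ((x*u) * Real.exp (-Real.sqrt (Real.log (x*u)))) := herry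
      _ ≤ D * (x * E) := by
          apply mul_le_mul_of_nonneg_left _ hD0
          apply mul_le_mul hyx h1 (Real.exp_pos _).le hx0.le
      _ = D * x * E := by ring
  have he_xy : |(picnt (x + x*u) : ℝ) - li (x + x*u)| ≤ 2 * (D * x * E) := by
    have hlxy : L ≤ Real.log (x + x*u) := Real.log_le_log hx0 (by linarith)
    have h1 : Real.exp (-Real.sqrt (Real.log (x + x*u))) ≤ E := by
      rw [hE]; apply Real.exp_le_exp.mpr
      have := Real.sqrt_le_sqrt hlxy
      linarith
    calc |(picnt (x + x*u) : ℝ) - li (x + x*u)|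
        ≤ D * ((x + x*u) * Real.exp (-Real.sqrt (Real.log (x + x*u)))) := herrxy
      _ ≤ D * ((2*x) * E) := by
          apply mul_le_mul_of_nonneg_left _ hD0
          apply mul_le_mul (by linarith) h1 (Real.exp_pos _).le (by linarith)
      _ = 2 * (D * x * E) := by ring
  -- the frequent hypothesis, cast to ℝ
  have hple' : (picnt x : ℝ) + (picnt (x*u) : ℝ) ≤ (picnt (x + x*u) : ℝ) := by
    exact_mod_cast hple
  have key1 : li (x*u) - (li (x + x*u) - li x) ≤ 4 * (D * x * E) := by
    have h1 : (picnt (x + x*u) : ℝ) - li (x + x*u) ≤ 2 * (D * x * E) :=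
      le_trans (le_abs_self _) he_xy
    have h3 : li (x*u) - (picnt (x*u) : ℝ) ≤ D * x * E := by
      have := neg_abs_le ((picnt (x*u) : ℝ) - li (x*u))
      linarith [he_y]
    have h2' : li x - (picnt x : ℝ) ≤ D * x * E := by
      have := neg_abs_le ((picnt x : ℝ) - li x)
      linarith [he_x]
    linarith
  -- convert conditions (a),(b) using the relation L^(2c+2) * u^2 = L^2
  have hrel : L ^ (2*c+2 : ℝ) * u^2 = L^2 := by
    rw [hu, ← hL, sq, ← Real.rpow_add hLpos, ← Real.rpow_add hLpos,
      show 2*c+2 + (-c + -c) = (2:ℝ) by ring,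
      show (2:ℝ) = ((2:ℕ):ℝ) by norm_num, Real.rpow_natCast]
  have hMpos : 0 < L ^ (2*c+2 : ℝ) := Real.rpow_pos_of_pos hLpos _
  have hL2 : (0:ℝ) < L^2 := by positivity
  have hE1 : 4 * (D * x * E) ≤ x * u^2 / (96 * L^2) := by
    have h0 : E * L ^ (2*c+2:ℝ) ≤ 1/(384*(D+1)) := haev
    have h1 : E * L ^ (2*c+2:ℝ) * u^2 ≤ 1/(384*(D+1)) * u^2 :=
      mul_le_mul_of_nonneg_right h0 (sq_nonneg u)
    rw [mul_assoc, hrel] at h1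
    -- h1 : E * L^2 ≤ u^2/(384*(D+1))
    have h384 : (0:ℝ) < 384*(D+1) := by linarith
    have h2 : E * L^2 * (384*(D+1)) ≤ u^2 := by
      calc E * L^2 * (384*(D+1)) ≤ 1/(384*(D+1)) * u^2 * (384*(D+1)) :=
            mul_le_mul_of_nonneg_right h1 h384.le
        _ = u^2 := by field_simp
    rw [le_div_iff₀ (show (0:ℝ) < 96*L^2 by positivity)]
    have h3 := mul_le_mul_of_nonneg_left h2 hx0.le
    have haux : 0 ≤ x * E * L^2 :=
      mul_nonneg (mul_nonneg hx0.le hE0.le) (sq_nonneg L)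
    linarith [h3, haux]
  have hE2 : Real.sqrt x ≤ x * u^2 / (64 * L^2) := by
    have h0 : Real.sqrt x * L ^ (2*c+2:ℝ) ≤ x/64 := hbev
    have h1 : Real.sqrt x * L ^ (2*c+2:ℝ) * u^2 ≤ x/64 * u^2 :=
      mul_le_mul_of_nonneg_right h0 (sq_nonneg u)
    rw [mul_assoc, hrel] at h1
    rw [le_div_iff₀ (show (0:ℝ) < 64*L^2 by positivity)]
    linarith [h1]
  -- final contradiction
  have hfin : x*u^2/(16*L^2) ≤ x*u^2/(96*L^2) + x*u^2/(64*L^2) := by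
    have h1 := key2.trans key1
    linarith [hE1, hE2]
  have e1 : x*u^2/(16*L^2) = (x*u^2/L^2)/16 := by ring
  have e2 : x*u^2/(96*L^2) = (x*u^2/L^2)/96 := by ring
  have e3 : x*u^2/(64*L^2) = (x*u^2/L^2)/64 := by ring
  have hQ : 0 < x*u^2/L^2 := by positivity
  rw [e1, e2, e3] at hfin
  linarith
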